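/- arXiv:2302.00264 — 2 statements merged into one kernel-verified Lean document; each statement's English description precedes it below -/
import Mathlib

section
/- In any ordered goods instance with m ≥ n + 1 items, if there is an agent i with v_i({n, n+1}) ≥ μ_i, then removing agent i together with the items {n, n+1} (allocating {n, n+1} to i) is a valid reduction. -/
/-! Take an MMS partition for a remaining agent. By pigeonhole one bundle contains two of the
items `1, …, n + 1`; exchanging them with `n` and `n + 1` can only improve the other bundles,
which receive earlier items in return. Dropping that bundle together with `n` and `n + 1`, and
merging its other items into some other bundle, leaves `n - 1` bundles of the remaining items,
each still worth at least the original maximin share. -/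

open Finset

/-- `A` is an (ordered) partition of the item set `M` into bundles indexed by
the agent set `N`: bundles are pairwise disjoint subsets of `M` whose union is `M`. -/
def IsPartition (N M : Finset ℕ) (A : ℕ → Finset ℕ) : Prop :=
  (∀ i ∈ N, A i ⊆ M) ∧
  (∀ i ∈ N, ∀ j ∈ N, i ≠ j → Disjoint (A i) (A j)) ∧
  N.biUnion A = M

/-- Additive value of a bundle `B` under item values `v`. -/
noncomputable def bval (v : ℕ → ℝ) (B : Finset ℕ) : ℝ := ∑ g ∈ B, v g

/-- The maximin share of an agent with item values `v`, over the instance with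
agent set `N` and item set `M`: the largest, over all partitions, of the minimum
bundle value. -/
noncomputable def mms (N M : Finset ℕ) (v : ℕ → ℝ) : ℝ :=
  sSup { x | ∃ A : ℕ → Finset ℕ, IsPartition N M A ∧
    x = sInf ((fun i => bval v (A i)) '' (N : Set ℕ)) }

/-- `A` is an MMS partition for an agent with item values `v`: every bundle is
worth at least the agent's maximin share. -/
def IsMMSPartition (N M : Finset ℕ) (v : ℕ → ℝ) (A : ℕ → Finset ℕ) : Prop :=
  IsPartition N M A ∧ ∀ j ∈ N, mms N M v ≤ bval v (A j)

/-- The instance `(N, M, v)` admits an MMS allocation: an allocation giving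
every agent a bundle worth at least her maximin share. -/
def ExistsMMSAllocation (N M : Finset ℕ) (v : ℕ → ℕ → ℝ) : Prop :=
  ∃ A : ℕ → Finset ℕ, IsPartition N M A ∧
    ∀ i ∈ N, mms N M (v i) ≤ bval (v i) (A i)

/-- A goods instance: all item values are non-negative. -/
def GoodsInstance (N M : Finset ℕ) (v : ℕ → ℕ → ℝ) : Prop :=
  ∀ i ∈ N, ∀ j ∈ M, 0 ≤ v i j

/-- A chores instance: all item values are non-positive. -/
def ChoresInstance (N M : Finset ℕ) (v : ℕ → ℕ → ℝ) : Prop :=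
  ∀ i ∈ N, ∀ j ∈ M, v i j ≤ 0

/-- Ordered goods instance: lower-numbered items are (weakly) more valuable. -/
def OrderedGoods (N M : Finset ℕ) (v : ℕ → ℕ → ℝ) : Prop :=
  ∀ i ∈ N, ∀ j ∈ M, ∀ k ∈ M, j ≤ k → v i k ≤ v i j

/-- Ordered chores instance: lower-numbered items are (weakly) worse. -/
def OrderedChores (N M : Finset ℕ) (v : ℕ → ℕ → ℝ) : Prop :=
  ∀ i ∈ N, ∀ j ∈ M, ∀ k ∈ M, j ≤ k → v i j ≤ v i k

/-- Removing agents `N'` and items `M'` is a valid reduction: `M'` can be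
partitioned among the agents of `N'` so that each receives a bundle worth at
least her MMS in the original instance, and in the reduced instance every
remaining agent's MMS is at least her MMS in the original instance. -/
def ValidReduction (N M : Finset ℕ) (v : ℕ → ℕ → ℝ) (N' M' : Finset ℕ) : Prop :=
  N' ⊆ N ∧ M' ⊆ M ∧
  (∃ B : ℕ → Finset ℕ, IsPartition N' M' B ∧
    ∀ i ∈ N', mms N M (v i) ≤ bval (v i) (B i)) ∧
  ∀ i ∈ N \ N', mms N M (v i) ≤ mms (N \ N') (M \ M') (v i)

/-- In an ordered instance, bundle `B` dominates bundle `B'`: there is an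
injective map `f : B' → B` with `f j ≤ j` for all `j ∈ B'`. -/
def Dominates (B B' : Finset ℕ) : Prop :=
  ∃ f : ℕ → ℕ, Set.InjOn f (B' : Set ℕ) ∧ ∀ j ∈ B', f j ∈ B ∧ f j ≤ j

def minBundleValues (N M : Finset ℕ) (v : ℕ → ℝ) : Set ℝ :=
  { x | ∃ A : ℕ → Finset ℕ, IsPartition N M A ∧
    x = sInf ((fun i => bval v (A i)) '' (N : Set ℕ)) }

lemma mms_eq_sSup_minBundleValues (N M : Finset ℕ) (v : ℕ → ℝ) :
    mms N M v = sSup (minBundleValues N M v) := rfl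

section IsPartition

variable {N M : Finset ℕ} {A : ℕ → Finset ℕ}

lemma isPartition_single {j : ℕ} (hj : j ∈ N) :
    IsPartition N M (fun l => if l = j then M else ∅) := by
  refine ⟨fun l _ => ?_, fun l _ l' _ hll' => ?_, ?_⟩
  · dsimp only
    split_ifs <;> simp
  · dsimp only
    split_ifs <;> simp_all
  · ext x
    simp only [mem_biUnion]
    constructor
    · rintro ⟨l, -, hx⟩
      split_ifs at hx <;> simp_all
    · exact fun hx => ⟨j, hj, by simpa⟩

lemma IsPartition.image_items (hA : IsPartition N M A) {τ : ℕ → ℕ}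
    (hτ : Function.Injective τ) :
    IsPartition N (M.image τ) (fun j => (A j).image τ) := by
  obtain ⟨hsub, hdisj, hunion⟩ := hA
  refine ⟨fun j hj => image_subset_image (hsub j hj),
    fun j hj l hl hjl => (disjoint_image hτ).mpr (hdisj j hj l hl hjl), ?_⟩
  rw [← hunion, biUnion_image]

lemma isPartition_image_agents_iff (σ : Equiv.Perm ℕ) :
    IsPartition (N.image σ) M A ↔ IsPartition N M (A ∘ σ) := by
  simp only [IsPartition, forall_mem_image, image_biUnion, Function.comp_apply, ne_eq,
    σ.injective.eq_iff]
  rfl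

lemma IsPartition.erase_bundle (hA : IsPartition N M A) {k : ℕ} (hk : k ∈ N) :
    IsPartition (N.erase k) (M \ A k) A := by
  obtain ⟨hsub, hdisj, hunion⟩ := hA
  refine ⟨fun j hj => subset_sdiff.mpr ⟨hsub j (mem_of_mem_erase hj),
      hdisj j (mem_of_mem_erase hj) k hk (ne_of_mem_erase hj)⟩,
    fun j hj l hl => hdisj j (mem_of_mem_erase hj) l (mem_of_mem_erase hl), ?_⟩
  rw [← hunion, ← insert_erase hk, biUnion_insert, erase_insert (notMem_erase k N),
    union_sdiff_cancel_left]
  exact (disjoint_biUnion_right _ _ _).mpr fun j hj =>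
    hdisj k hk j (mem_of_mem_erase hj) (ne_of_mem_erase hj).symm

lemma IsPartition.update_union (hA : IsPartition N M A) {j : ℕ} (hj : j ∈ N) {T : Finset ℕ}
    (hT : Disjoint M T) : IsPartition N (M ∪ T) (Function.update A j (A j ∪ T)) := by
  obtain ⟨hsub, hdisj, hunion⟩ := hA
  refine ⟨fun l hl => ?_, fun l hl l' hl' hll' => ?_, ?_⟩
  · rcases eq_or_ne l j with rfl | h
    · simpa using union_subset_union (hsub l hl) subset_rfl
    · simpa [h] using (hsub l hl).trans subset_union_left
  · have hdisj_update : ∀ p ∈ N, p ≠ j → ∀ q ∈ N, q ≠ p →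
        Disjoint (A p) (Function.update A j (A j ∪ T) q) := by
      intro p hp hpj q hq hqp
      rcases eq_or_ne q j with rfl | hqj
      · simpa using
          disjoint_union_right.mpr ⟨hdisj p hp q hq hqp.symm, hT.mono_left (hsub p hp)⟩
      · simpa [hqj] using hdisj p hp q hq hqp.symm
    rcases eq_or_ne l j with rfl | hlj
    · simpa [Function.update_of_ne hll'.symm] using (hdisj_update l' hl' hll'.symm l hl hll').symm
    · simpa [Function.update_of_ne hlj] using hdisj_update l hl hlj l' hl' hll'.symm
  · rw [← hunion, ← insert_erase hj, biUnion_insert, biUnion_insert, Function.update_self,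
      biUnion_congr rfl fun l hl => Function.update_of_ne (ne_of_mem_erase hl) _ _,
      union_right_comm]

lemma IsPartition.exists_lt_of_card_lt (hA : IsPartition N M A) {S : Finset ℕ} (hS : S ⊆ M)
    (hcard : #N < #S) :
    ∃ k ∈ N, ∃ a b, a < b ∧ a ∈ S ∧ b ∈ S ∧ a ∈ A k ∧ b ∈ A k := by
  have howner : ∀ x ∈ S, ∃ j ∈ N, x ∈ A j := fun x hx => by
    simpa [← hA.2.2] using hS hx
  choose! owner howner_mem howner_spec using howner
  obtain ⟨x, hx, y, hy, hxy, hown⟩ :=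
    exists_ne_map_eq_of_card_lt_of_maps_to hcard howner_mem
  rcases hxy.lt_or_gt with h | h
  · exact ⟨owner x, howner_mem x hx, x, y, h, hx, hy, howner_spec x hx,
      hown ▸ howner_spec y hy⟩
  · exact ⟨owner x, howner_mem x hx, y, x, h, hy, hx, hown ▸ howner_spec y hy,
      howner_spec x hx⟩

end IsPartition

section MMS

variable {N M : Finset ℕ} {v : ℕ → ℝ}

lemma minBundleValues_finite : (minBundleValues N M v).Finite := by
  refine ((M.powerset.image (bval v)).finite_toSet.insert 0).subset ?_
  rintro _ ⟨A, hA, rfl⟩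
  rcases (N : Set ℕ).eq_empty_or_nonempty with hN | hN
  · simp [hN] -- the junk value `sInf ∅ = 0`
  · obtain ⟨j, hj, hx⟩ := (hN.image (fun j => bval v (A j))).csInf_mem (N.finite_toSet.image _)
    exact Or.inr (by simpa using ⟨A j, hA.1 j hj, hx⟩)

lemma le_mms_of_isPartition {A : ℕ → Finset ℕ} (hA : IsPartition N M A) (hN : N.Nonempty)
    {μ : ℝ} (hμ : ∀ j ∈ N, μ ≤ bval v (A j)) : μ ≤ mms N M v := by
  have hmin : μ ≤ sInf ((fun j => bval v (A j)) '' (N : Set ℕ)) :=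
    le_csInf ((coe_nonempty.mpr hN).image _) (by rintro _ ⟨j, hj, rfl⟩; exact hμ j hj)
  exact hmin.trans (le_csSup minBundleValues_finite.bddAbove ⟨A, hA, rfl⟩)

lemma exists_isMMSPartition (hN : N.Nonempty) : ∃ A, IsMMSPartition N M v A := by
  obtain ⟨j, hj⟩ := hN
  have hne : (minBundleValues N M v).Nonempty := ⟨_, _, isPartition_single hj, rfl⟩
  obtain ⟨A, hA, hmms⟩ := hne.csSup_mem minBundleValues_finite
  refine ⟨A, hA, fun l hl => ?_⟩
  rw [mms_eq_sSup_minBundleValues, hmms]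
  exact csInf_le (N.finite_toSet.image _).bddBelow ⟨l, hl, rfl⟩

lemma mms_image_agents (σ : Equiv.Perm ℕ) : mms (N.image σ) M v = mms N M v := by
  simp only [mms_eq_sSup_minBundleValues]
  congr 1
  ext x
  constructor
  · rintro ⟨A, hA, rfl⟩
    refine ⟨A ∘ σ, (isPartition_image_agents_iff σ).mp hA, ?_⟩
    rw [coe_image, Set.image_image]
    rfl
  · rintro ⟨A, hA, rfl⟩
    refine ⟨A ∘ σ.symm,
      (isPartition_image_agents_iff σ).mpr (by simpa [Function.comp_def]), ?_⟩
    rw [coe_image, Set.image_image]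
    simp

lemma mms_erase_eq_mms_erase {i k : ℕ} (hi : i ∈ N) (hk : k ∈ N) :
    mms (N.erase i) M v = mms (N.erase k) M v := by
  have himage : (N.erase k).image (Equiv.swap i k) = N.erase i := by
    ext x
    simp only [mem_image, mem_erase]
    constructor
    · rintro ⟨y, ⟨hyk, hy⟩, rfl⟩
      rw [Equiv.swap_apply_def]
      split_ifs <;> grind
    · rintro ⟨hxi, hx⟩
      refine ⟨Equiv.swap i k x, ⟨?_, ?_⟩, Equiv.swap_apply_self _ _ _⟩ <;>
        rw [Equiv.swap_apply_def] <;> split_ifs <;> grind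
  rw [← himage, mms_image_agents]

end MMS

lemma bval_le_bval_of_subset {v : ℕ → ℝ} {B B' : Finset ℕ} (hB : B ⊆ B')
    (hv : ∀ x ∈ B', 0 ≤ v x) : bval v B ≤ bval v B' :=
  sum_le_sum_of_subset_of_nonneg hB fun x hx _ => hv x hx

lemma le_mms_erase_sdiff {N M S : Finset ℕ} {v : ℕ → ℝ} {A : ℕ → Finset ℕ} {i k : ℕ} {μ : ℝ}
    (hv : ∀ x ∈ M, 0 ≤ v x) (hA : IsPartition N M A) (hk : k ∈ N) (hS : S ⊆ A k)
    (hi : i ∈ N) (hne : (N.erase i).Nonempty) (hμ : ∀ j ∈ N, j ≠ k → μ ≤ bval v (A j)) :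
    μ ≤ mms (N.erase i) (M \ S) v := by
  rw [mms_erase_eq_mms_erase hi hk]
  obtain ⟨j, hj⟩ : (N.erase k).Nonempty := by
    rw [← card_pos, card_erase_of_mem hk, ← card_erase_of_mem hi, card_pos]
    exact hne
  have hpart := (hA.erase_bundle hk).update_union hj (T := A k \ S)
    (disjoint_sdiff_self_left.mono_right sdiff_subset)
  rw [sdiff_union_sdiff_cancel (hA.1 k hk) hS] at hpart
  refine le_mms_of_isPartition hpart ⟨j, hj⟩ fun l hl =>
    (hμ l (mem_of_mem_erase hl) (ne_of_mem_erase hl)).trans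
      (bval_le_bval_of_subset ?_ fun x hx => hv x (sdiff_subset (hpart.1 l hl hx)))
  rcases eq_or_ne l j with rfl | hlj
  · simp
  · simp [hlj]

section SwapIntoPlace

variable {a b n : ℕ}

abbrev swapIntoPlace (a b n : ℕ) : Equiv.Perm ℕ := Equiv.swap a n * Equiv.swap b (n + 1)

lemma swapIntoPlace_left (hab : a < b) (hb : b ≤ n + 1) : swapIntoPlace a b n a = n := by
  simp [Equiv.swap_apply_of_ne_of_ne hab.ne (by omega : a ≠ n + 1)]

lemma swapIntoPlace_right (hab : a < b) (hb : b ≤ n + 1) : swapIntoPlace a b n b = n + 1 := by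
  simp [Equiv.swap_apply_of_ne_of_ne (by omega : n + 1 ≠ a) (by omega : n + 1 ≠ n)]

lemma swapIntoPlace_apply_le (hab : a < b) (hb : b ≤ n + 1) {x : ℕ} (hxa : x ≠ a)
    (hxb : x ≠ b) :
    swapIntoPlace a b n x ≤ x := by
  simp only [Equiv.Perm.coe_mul, Function.comp_apply, Equiv.swap_apply_def]
  split_ifs <;> omega

lemma image_swapIntoPlace_Icc {m : ℕ} (ha : 1 ≤ a) (hab : a < b) (hb : b ≤ n + 1)
    (hm : n + 1 ≤ m) : (Icc 1 m).image (swapIntoPlace a b n) = Icc 1 m := by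
  refine eq_of_subset_of_card_le (fun y hy => ?_)
    (card_image_of_injective _ (Equiv.injective _)).ge
  obtain ⟨x, hx, rfl⟩ := mem_image.mp hy
  simp only [mem_Icc, Equiv.Perm.coe_mul, Function.comp_apply, Equiv.swap_apply_def] at hx ⊢
  split_ifs <;> omega

end SwapIntoPlace

lemma mms_le_mms_erase_sdiff_pair {n m i : ℕ} {v : ℕ → ℝ} (hm : n + 1 ≤ m)
    (hv : ∀ x ∈ Icc 1 m, 0 ≤ v x)
    (hord : ∀ x ∈ Icc 1 m, ∀ y ∈ Icc 1 m, x ≤ y → v y ≤ v x)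
    (hi : i ∈ Icc 1 n) (hne : ((Icc 1 n).erase i).Nonempty) :
    mms (Icc 1 n) (Icc 1 m) v ≤ mms ((Icc 1 n).erase i) (Icc 1 m \ {n, n + 1}) v := by
  obtain ⟨A, hA, hAμ⟩ := exists_isMMSPartition (M := Icc 1 m) (v := v) ⟨i, hi⟩
  obtain ⟨k, hk, a, b, hab, haS, hbS, haA, hbA⟩ :=
    hA.exists_lt_of_card_lt (Icc_subset_Icc_right hm) (by simp : #(Icc 1 n) < #(Icc 1 (n + 1)))
  have ha : 1 ≤ a := (mem_Icc.mp haS).1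
  have hb : b ≤ n + 1 := (mem_Icc.mp hbS).2
  set τ := swapIntoPlace a b n
  have hτM := image_swapIntoPlace_Icc ha hab hb hm
  have hA' := hτM ▸ hA.image_items τ.injective
  refine le_mms_erase_sdiff hv hA' hk ?_ hi hne fun j hj hjk => (hAμ j hj).trans ?_
  · rw [insert_subset_iff, singleton_subset_iff]
    exact ⟨swapIntoPlace_left hab hb ▸ mem_image_of_mem τ haA,
      swapIntoPlace_right hab hb ▸ mem_image_of_mem τ hbA⟩
  · rw [bval, bval, sum_image τ.injective.injOn]
    refine sum_le_sum fun x hx => ?_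
    have hxk : x ∉ A k := disjoint_left.mp (hA.2.1 j hj k hk hjk) hx
    have hxM : x ∈ Icc 1 m := hA.1 j hj hx
    exact hord _ (hτM ▸ mem_image_of_mem τ hxM) x hxM
      (swapIntoPlace_apply_le hab hb (by rintro rfl; exact hxk haA) (by rintro rfl; exact hxk hbA))

theorem pigeonhole_reduction_two (n m : ℕ) (hm : n + 1 ≤ m) (v : ℕ → ℕ → ℝ)
    (hgoods : GoodsInstance (Finset.Icc 1 n) (Finset.Icc 1 m) v)
    (hord : OrderedGoods (Finset.Icc 1 n) (Finset.Icc 1 m) v)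
    (i : ℕ) (hi : i ∈ Finset.Icc 1 n)
    (hval : mms (Finset.Icc 1 n) (Finset.Icc 1 m) (v i) ≤ bval (v i) {n, n + 1}) :
    ValidReduction (Finset.Icc 1 n) (Finset.Icc 1 m) v {i} {n, n + 1} := by
  have hn : 1 ≤ n := (mem_Icc.mp hi).1.trans (mem_Icc.mp hi).2
  have hpair : {n, n + 1} ⊆ Icc 1 m := by
    simp only [insert_subset_iff, singleton_subset_iff, mem_Icc]
    omega
  refine ⟨singleton_subset_iff.mpr hi, hpair,
    ⟨_, isPartition_single (mem_singleton_self i), by simpa using hval⟩, fun i' hi' => ?_⟩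
  rw [sdiff_singleton_eq_erase] at hi' ⊢
  have hi'N := mem_of_mem_erase hi'
  exact mms_le_mms_erase_sdiff_pair hm (hgoods i' hi'N) (hord i' hi'N) hi ⟨i', hi'⟩
end

section
/- Let I be an ordered chores instance with n agents and m = n + c chores for some integer c > 0. Suppose there is an integer n_{c−1} > 0 such that every chores instance with n' ≥ n_{c−1} agents and n' + (c − 1) chores has an MMS allocation, and suppose n − 1 ≥ n_{c−1}. If some agent i of I has an MMS partition with at least n − 2 bundles of size less than two and at least n − 1 bundles of size less than three, then I has an MMS allocation. -/
open Finset

/-!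
If the MMS partition of agent `i` has at most two bundles with two or more chores, say `A b` and
`A c'` with `|A c'| ≤ 2`, then every other bundle (at most one chore) is acceptable to every agent.
If some agent `j ≠ i` also accepts `A c'`, permuting the bundles gives `A b` to `i`, `A c'` to `j`
and the small bundles to everyone else. Otherwise `A c' = {c₁, c₂}` is worth less than `μ_j` to
every `j ≠ i`; give it to `i` and remove `i`. If all bundles of a partition are worth more than
`y ≥ v_j(c₁) + v_j(c₂)` to `j`, then `c₁` and `c₂` lie in different bundles, and merging these two
while dropping `c₁, c₂` gives a bundle worth more than `2y - v_j(c₁) - v_j(c₂) ≥ y`; so the MMS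
of `j` does not drop. The reduced instance has `n - 1` agents and `(n - 1) + (c - 1)` chores,
and after relabelling it has an MMS allocation by hypothesis.
-/

lemma exists_bijOn_of_card_eq {α β : Type*} [Nonempty β] {s : Finset α} {t : Finset β}
    (h : s.card = t.card) : ∃ f : α → β, Set.BijOn f s t :=
  s.finite_toSet.exists_bijOn_of_encard_eq (by simp [h])

lemma exists_bijOn_apply_eq_apply_eq {N : Finset ℕ} {i j b c : ℕ} (hi : i ∈ N) (hj : j ∈ N)
    (hij : i ≠ j) (hb : b ∈ N) (hc : c ∈ N) (hbc : b ≠ c) :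
    ∃ σ : ℕ → ℕ, Set.BijOn σ N N ∧ σ i = b ∧ σ j = c := by
  set s := Equiv.swap i b
  have hsj : s j ≠ b := fun h => hij (s.injective (h.trans (Equiv.swap_apply_left i b).symm)).symm
  have hs : Set.BijOn s N N := Equiv.bijOn_swap hi hb
  refine ⟨Equiv.swap (s j) c ∘ s, (Equiv.bijOn_swap (hs.mapsTo hj) hc).comp hs, ?_, ?_⟩
  · simp only [Function.comp_apply, s, Equiv.swap_apply_left]
    exact Equiv.swap_apply_of_ne_of_ne hsj.symm hbc
  · simp

lemma card_filter_le_of_exists_subset {N : Finset ℕ} {f : ℕ → ℕ} {r t : ℕ}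
    (h : ∃ S ⊆ N, N.card - r ≤ S.card ∧ ∀ j ∈ S, f j < t) :
    (N.filter fun j => t ≤ f j).card ≤ r := by
  obtain ⟨S, hSN, hS, hSf⟩ := h
  have hsub : N.filter (fun j => t ≤ f j) ⊆ N \ S := fun j hj => by
    rw [mem_filter] at hj
    exact mem_sdiff.2 ⟨hj.1, fun hjS => (hSf j hjS).not_ge hj.2⟩
  have := card_le_card hsub
  rw [card_sdiff_of_subset hSN] at this
  omega

lemma exists_pair_cover_of_card_filter_le {N : Finset ℕ} {f : ℕ → ℕ} (hN : 2 ≤ N.card)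
    (h2 : (N.filter fun j => 2 ≤ f j).card ≤ 2) (h3 : (N.filter fun j => 3 ≤ f j).card ≤ 1) :
    ∃ b ∈ N, ∃ c ∈ N, b ≠ c ∧ f c ≤ 2 ∧ ∀ k ∈ N, k ≠ b → k ≠ c → f k ≤ 1 := by
  obtain ⟨b, hb, hbmax⟩ := N.exists_max_image f (card_pos.1 (by omega))
  obtain ⟨c, hc, hcmax⟩ := (N.erase b).exists_max_image f
    (card_pos.1 (by rw [card_erase_of_mem hb]; omega))
  obtain ⟨hcb, hcN⟩ := mem_erase.1 hc
  refine ⟨b, hb, c, hcN, hcb.symm, ?_, fun k hk hkb hkc => ?_⟩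
  · by_contra! hc3
    have : 1 < (N.filter fun j => 3 ≤ f j).card :=
      one_lt_card.2 ⟨b, by simp [hb]; linarith [hbmax c hcN], c, by simp [hcN]; omega, hcb.symm⟩
    omega
  · by_contra! hk2
    have hck := hcmax k (mem_erase.2 ⟨hkb, hk⟩)
    have := hbmax c hcN
    have : 2 < (N.filter fun j => 2 ≤ f j).card :=
      two_lt_card.2 ⟨k, by simp [hk]; omega, b, by simp [hb]; omega, c, by simp [hcN]; omega,
        hkb, hkc, hcb.symm⟩
    omega

section Bundles

variable {v : ℕ → ℝ} {B C : Finset ℕ}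

lemma bval_sdiff (hCB : C ⊆ B) : bval v (B \ C) = bval v B - bval v C := by
  rw [eq_sub_iff_add_eq]
  exact sum_sdiff hCB

lemma bval_le_bval_of_subset_s19 (hv : ∀ g ∈ B, v g ≤ 0) (hCB : C ⊆ B) : bval v B ≤ bval v C := by
  have : bval v (B \ C) ≤ 0 := sum_nonpos fun g hg => hv g (mem_sdiff.1 hg).1
  rw [bval_sdiff hCB] at this
  linarith

lemma bval_filter_bijOn {M₀ M : Finset ℕ} {f : ℕ → ℕ} (hf : Set.BijOn f M₀ M) (hB : B ⊆ M) :
    bval (v ∘ f) (M₀.filter fun t => f t ∈ B) = bval v B :=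
  sum_nbij f (fun _ ht => (mem_filter.1 ht).2) (hf.injOn.mono fun _ ht => (mem_filter.1 ht).1)
    (fun g hg => by
      obtain ⟨t, ht, rfl⟩ := hf.surjOn (hB hg)
      exact ⟨t, mem_filter.2 ⟨ht, hg⟩, rfl⟩)
    fun _ _ => rfl

end Bundles

lemma isPartition_ite_eq {N : Finset ℕ} (M : Finset ℕ) {a : ℕ} (ha : a ∈ N) :
    IsPartition N M fun k => if k = a then M else ∅ := by
  refine ⟨fun k _ => by dsimp only; split_ifs <;> simp, fun k _ l _ hkl => ?_, ?_⟩
  · dsimp only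
    split_ifs <;> simp_all
  · ext g
    simp only [mem_biUnion]
    refine ⟨fun ⟨k, _, hg⟩ => by split_ifs at hg <;> simp_all, fun hg => ⟨a, ha, by simp [hg]⟩⟩

namespace IsPartition

variable {N M N₀ M₀ : Finset ℕ} {A B : ℕ → Finset ℕ}

lemma exists_mem (hA : IsPartition N M A) {g : ℕ} (hg : g ∈ M) : ∃ k ∈ N, g ∈ A k :=
  mem_biUnion.1 (hA.2.2 ▸ hg)

lemma comp_bijOn (hA : IsPartition N M A) {e : ℕ → ℕ} (he : Set.BijOn e N₀ N) :
    IsPartition N₀ M (A ∘ e) := by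
  refine ⟨fun k hk => hA.1 _ (he.mapsTo hk),
    fun k hk l hl hkl => hA.2.1 _ (he.mapsTo hk) _ (he.mapsTo hl) (he.injOn.ne hk hl hkl),
    subset_antisymm (biUnion_subset.2 fun k hk => hA.1 _ (he.mapsTo hk)) fun g hg => ?_⟩
  obtain ⟨q, hq, hgq⟩ := hA.exists_mem hg
  obtain ⟨k, hk, rfl⟩ := he.surjOn hq
  exact mem_biUnion.2 ⟨k, hk, hgq⟩

lemma filter_bijOn (hA : IsPartition N M A) {f : ℕ → ℕ} (hf : Set.BijOn f M₀ M) :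
    IsPartition N M₀ fun k => M₀.filter fun t => f t ∈ A k := by
  refine ⟨fun _ _ => filter_subset _ _,
    fun k hk l hl hkl => disjoint_filter.2 fun _ _ h => disjoint_left.1 (hA.2.1 k hk l hl hkl) h,
    subset_antisymm (biUnion_subset.2 fun _ _ => filter_subset _ _) fun t ht => ?_⟩
  obtain ⟨k, hk, hfk⟩ := hA.exists_mem (hf.mapsTo ht)
  exact mem_biUnion.2 ⟨k, hk, mem_filter.2 ⟨ht, hfk⟩⟩

lemma sdiff (hA : IsPartition N M A) (C : Finset ℕ) :
    IsPartition N (M \ C) fun k => A k \ C := by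
  refine ⟨fun k hk => sdiff_subset_sdiff (hA.1 k hk) le_rfl,
    fun k hk l hl hkl => (hA.2.1 k hk l hl hkl).mono sdiff_subset sdiff_subset, ?_⟩
  ext g
  simp only [mem_biUnion, mem_sdiff, ← hA.2.2]
  aesop

lemma merge (hA : IsPartition N M A) {p₁ p₂ : ℕ} (hp₁ : p₁ ∈ N) (hp₂ : p₂ ∈ N) (hne : p₁ ≠ p₂) :
    IsPartition (N.erase p₂) M (Function.update A p₁ (A p₁ ∪ A p₂)) := by
  obtain ⟨hsub, hdisj, hunion⟩ := hA
  refine ⟨fun k hk => ?_, fun k hk l hl hkl => ?_, ?_⟩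
  · rcases eq_or_ne k p₁ with rfl | hk₁
    · simpa using union_subset (hsub _ hp₁) (hsub _ hp₂)
    · simpa [hk₁] using hsub k (mem_of_mem_erase hk)
  · obtain ⟨hk₂, hkN⟩ := mem_erase.1 hk
    obtain ⟨hl₂, hlN⟩ := mem_erase.1 hl
    rcases eq_or_ne k p₁ with hk₁ | hk₁ <;> rcases eq_or_ne l p₁ with hl₁ | hl₁
    · exact absurd (hk₁.trans hl₁.symm) hkl
    · rw [hk₁, Function.update_self, Function.update_of_ne hl₁]
      exact disjoint_union_left.2 ⟨hdisj _ hp₁ _ hlN hl₁.symm, hdisj _ hp₂ _ hlN hl₂.symm⟩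
    · rw [hl₁, Function.update_self, Function.update_of_ne hk₁]
      exact disjoint_union_right.2 ⟨hdisj _ hkN _ hp₁ hk₁, hdisj _ hkN _ hp₂ hk₂⟩
    · rw [Function.update_of_ne hk₁, Function.update_of_ne hl₁]
      exact hdisj _ hkN _ hlN hkl
  · rw [← hunion]
    ext g
    simp only [mem_biUnion, mem_erase, Function.update_apply]
    constructor
    · rintro ⟨k, ⟨-, hk⟩, hg⟩
      split_ifs at hg with hk₁
      · rcases mem_union.1 hg with hg | hg
        exacts [⟨p₁, hp₁, hg⟩, ⟨p₂, hp₂, hg⟩]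
      · exact ⟨k, hk, hg⟩
    · rintro ⟨k, hk, hg⟩
      by_cases hk₂ : k = p₂
      · subst hk₂
        exact ⟨p₁, ⟨hne, hp₁⟩, by simp [hg]⟩
      · refine ⟨k, ⟨hk₂, hk⟩, ?_⟩
        split_ifs with hk₁
        · subst hk₁; exact mem_union_left _ hg
        · exact hg

lemma piecewise (hB : IsPartition N₀ M₀ B) (hA : IsPartition (N \ N₀) (M \ M₀) A) (hN : N₀ ⊆ N)
    (hM : M₀ ⊆ M) : IsPartition N M fun k => if k ∈ N₀ then B k else A k := by
  have hsub : ∀ k ∈ N, (if k ∈ N₀ then B k else A k) ⊆ M := fun k hk => by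
    split_ifs with hk₀
    · exact (hB.1 k hk₀).trans hM
    · exact (hA.1 k (mem_sdiff.2 ⟨hk, hk₀⟩)).trans sdiff_subset
  refine ⟨hsub, fun k hk l hl hkl => ?_, ?_⟩
  · have hM₀ : Disjoint M₀ (M \ M₀) := disjoint_sdiff
    dsimp only
    split_ifs with hk₀ hl₀ hl₀
    · exact hB.2.1 k hk₀ l hl₀ hkl
    · exact hM₀.mono (hB.1 k hk₀) (hA.1 l (mem_sdiff.2 ⟨hl, hl₀⟩))
    · exact (hM₀.mono (hB.1 l hl₀) (hA.1 k (mem_sdiff.2 ⟨hk, hk₀⟩))).symm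
    · exact hA.2.1 k (mem_sdiff.2 ⟨hk, hk₀⟩) l (mem_sdiff.2 ⟨hl, hl₀⟩) hkl
  · refine subset_antisymm (biUnion_subset.2 hsub) fun g hg => mem_biUnion.2 ?_
    by_cases hg₀ : g ∈ M₀
    · obtain ⟨k, hk, hgk⟩ := hB.exists_mem hg₀
      exact ⟨k, hN hk, by simpa [hk] using hgk⟩
    · obtain ⟨k, hk, hgk⟩ := hA.exists_mem (mem_sdiff.2 ⟨hg, hg₀⟩)
      obtain ⟨hkN, hk₀⟩ := mem_sdiff.1 hk
      exact ⟨k, hkN, by simpa [hk₀] using hgk⟩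

end IsPartition

section MaximinShare

variable {N M N₀ M₀ : Finset ℕ} {v : ℕ → ℝ}

lemma le_mms_of_isPartition_s19 (hv : ∀ g ∈ M, v g ≤ 0) (hN : N.Nonempty) {Q : ℕ → Finset ℕ}
    (hQ : IsPartition N M Q) {r : ℝ} (hr : ∀ k ∈ N, r ≤ bval v (Q k)) : r ≤ mms N M v := by
  have hbdd : BddAbove { x | ∃ A : ℕ → Finset ℕ, IsPartition N M A ∧
      x = sInf ((fun k => bval v (A k)) '' (N : Set ℕ)) } := by
    refine ⟨0, ?_⟩
    rintro _ ⟨A, hA, rfl⟩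
    obtain ⟨k, hk⟩ := hN
    exact (csInf_le (N.finite_toSet.image _).bddBelow ⟨k, hk, rfl⟩).trans
      (sum_nonpos fun g hg => hv g (hA.1 k hk hg))
  refine le_trans ?_ (le_csSup hbdd ⟨Q, hQ, rfl⟩)
  exact le_csInf ((coe_nonempty.2 hN).image _) (by rintro _ ⟨k, hk, rfl⟩; exact hr k hk)

lemma exists_isPartition_lt_bval (hN : N.Nonempty) {y : ℝ} (hy : y < mms N M v) :
    ∃ Q : ℕ → Finset ℕ, IsPartition N M Q ∧ ∀ k ∈ N, y < bval v (Q k) := by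
  obtain ⟨a, ha⟩ := hN
  obtain ⟨_, ⟨Q, hQ, rfl⟩, hyQ⟩ :=
    exists_lt_of_lt_csSup (by exact ⟨_, _, isPartition_ite_eq M ha, rfl⟩) hy
  exact ⟨Q, hQ, fun k hk =>
    hyQ.trans_le (csInf_le (N.finite_toSet.image _).bddBelow ⟨k, hk, rfl⟩)⟩

lemma mms_le_of_forall_isPartition (hN : N.Nonempty) {x : ℝ}
    (h : ∀ Q : ℕ → Finset ℕ, IsPartition N M Q → ∃ k ∈ N, bval v (Q k) ≤ x) :
    mms N M v ≤ x := by
  by_contra! hx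
  obtain ⟨Q, hQ, hlt⟩ := exists_isPartition_lt_bval hN hx
  obtain ⟨k, hk, hle⟩ := h Q hQ
  exact (hlt k hk).not_ge hle

lemma mms_le_bval_of_card_le_one (hv : ∀ g ∈ M, v g ≤ 0) (hN : N.Nonempty) {B : Finset ℕ}
    (hBM : B ⊆ M) (hB : B.card ≤ 1) : mms N M v ≤ bval v B := by
  refine mms_le_of_forall_isPartition hN fun Q hQ => ?_
  obtain ⟨k, hk, hBk⟩ : ∃ k ∈ N, B ⊆ Q k := by
    rcases B.eq_empty_or_nonempty with rfl | ⟨g, hg⟩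
    · obtain ⟨k, hk⟩ := hN
      exact ⟨k, hk, empty_subset _⟩
    · obtain ⟨k, hk, hgk⟩ := hQ.exists_mem (hBM hg)
      exact ⟨k, hk, fun x hx => card_le_one.1 hB x hx g hg ▸ hgk⟩
  exact ⟨k, hk, bval_le_bval_of_subset_s19 (fun g hg => hv g (hQ.1 k hk hg)) hBk⟩

lemma mms_le_mms_of_bijOn (hv : ∀ g ∈ M, v g ≤ 0) (hN : N.Nonempty) {e f : ℕ → ℕ}
    (he : Set.BijOn e N₀ N) (hf : Set.BijOn f M₀ M) : mms N M v ≤ mms N₀ M₀ (v ∘ f) := by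
  refine le_of_forall_lt_imp_le_of_dense fun y hy => ?_
  obtain ⟨Q, hQ, hQy⟩ := exists_isPartition_lt_bval hN hy
  obtain ⟨k, hk⟩ := hN
  obtain ⟨k₀, hk₀, -⟩ := he.surjOn hk
  refine le_mms_of_isPartition_s19 (fun t ht => hv _ (hf.mapsTo ht)) ⟨k₀, hk₀⟩
    ((hQ.comp_bijOn he).filter_bijOn hf) fun l hl => ?_
  exact (hQy _ (he.mapsTo hl)).le.trans_eq (bval_filter_bijOn hf (hQ.1 _ (he.mapsTo hl))).symm

end MaximinShare

lemma le_mms_erase_sdiff_pair_of_isPartition {N M : Finset ℕ} {v : ℕ → ℝ}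
    (hv : ∀ g ∈ M, v g ≤ 0) {Q : ℕ → Finset ℕ} (hQ : IsPartition N M Q) {y : ℝ}
    (hQy : ∀ k ∈ N, y < bval v (Q k)) {a c₁ c₂ : ℕ} (ha : a ∈ N) (hc₁ : c₁ ∈ M) (hc₂ : c₂ ∈ M)
    (hne : c₁ ≠ c₂) (hcy : v c₁ + v c₂ ≤ y) : y ≤ mms (N.erase a) (M \ {c₁, c₂}) v := by
  obtain ⟨p₁, hp₁, hc₁p⟩ := hQ.exists_mem hc₁
  obtain ⟨p₂, hp₂, hc₂p⟩ := hQ.exists_mem hc₂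
  have hval : bval v {c₁, c₂} = v c₁ + v c₂ := sum_pair hne
  have hp : p₁ ≠ p₂ := by
    rintro rfl
    have := bval_le_bval_of_subset_s19 (fun g hg => hv g (hQ.1 p₁ hp₁ hg))
      (insert_subset hc₁p (singleton_subset_iff.2 hc₂p))
    linarith [hQy p₁ hp₁]
  set R := fun k => Function.update Q p₁ (Q p₁ ∪ Q p₂) k \ {c₁, c₂}
  have hR : IsPartition (N.erase p₂) (M \ {c₁, c₂}) R := (hQ.merge hp₁ hp₂ hp).sdiff _
  have hRy : ∀ k ∈ N.erase p₂, y ≤ bval v (R k) := by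
    intro k hk
    obtain ⟨hkp₂, hkN⟩ := mem_erase.1 hk
    rcases eq_or_ne k p₁ with rfl | hkp₁
    · have hC : {c₁, c₂} ⊆ Q k ∪ Q p₂ := insert_subset (mem_union_left _ hc₁p)
        (singleton_subset_iff.2 (mem_union_right _ hc₂p))
      have hunion : bval v (Q k ∪ Q p₂) = bval v (Q k) + bval v (Q p₂) :=
        sum_union (hQ.2.1 k hkN p₂ hp₂ hkp₂)
      simp only [R, Function.update_self]
      rw [bval_sdiff hC, hval, hunion]
      linarith [hQy k hkN, hQy p₂ hp₂]
    · simp only [R, Function.update_of_ne hkp₁]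
      exact (hQy k hkN).le.trans
        (bval_le_bval_of_subset_s19 (fun g hg => hv g (hQ.1 k hkN hg)) sdiff_subset)
  have hv' : ∀ g ∈ M \ {c₁, c₂}, v g ≤ 0 := fun g hg => hv g (mem_sdiff.1 hg).1
  obtain ⟨e, he⟩ := exists_bijOn_of_card_eq (s := N.erase a) (t := N.erase p₂)
    (by rw [card_erase_of_mem ha, card_erase_of_mem hp₂])
  calc y ≤ mms (N.erase p₂) (M \ {c₁, c₂}) v :=
        le_mms_of_isPartition_s19 hv' ⟨p₁, mem_erase.2 ⟨hp, hp₁⟩⟩ hR hRy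
    _ ≤ mms (N.erase a) (M \ {c₁, c₂}) (v ∘ id) :=
        mms_le_mms_of_bijOn hv' ⟨p₁, mem_erase.2 ⟨hp, hp₁⟩⟩ he (Set.bijOn_id _)

lemma mms_le_mms_erase_sdiff_pair_s19 {N M : Finset ℕ} {v : ℕ → ℝ} (hv : ∀ g ∈ M, v g ≤ 0)
    {a c₁ c₂ : ℕ} (ha : a ∈ N) (hc₁ : c₁ ∈ M) (hc₂ : c₂ ∈ M) (hne : c₁ ≠ c₂)
    (hlt : v c₁ + v c₂ < mms N M v) : mms N M v ≤ mms (N.erase a) (M \ {c₁, c₂}) v := by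
  refine le_of_forall_lt_imp_le_of_dense fun y hy => (le_max_left y (v c₁ + v c₂)).trans ?_
  obtain ⟨Q, hQ, hQy⟩ := exists_isPartition_lt_bval ⟨a, ha⟩ (max_lt hy hlt)
  exact le_mms_erase_sdiff_pair_of_isPartition hv hQ hQy ha hc₁ hc₂ hne (le_max_right _ _)

namespace ExistsMMSAllocation

variable {N M : Finset ℕ} {v : ℕ → ℕ → ℝ}

lemma of_bijOn (hv : ChoresInstance N M v) {N₀ M₀ : Finset ℕ} {e f : ℕ → ℕ}
    (he : Set.BijOn e N₀ N) (hf : Set.BijOn f M₀ M)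
    (h : ExistsMMSAllocation N₀ M₀ fun k t => v (e k) (f t)) : ExistsMMSAllocation N M v := by
  obtain ⟨A, hA, hAv⟩ := h
  have he' := he.symm he.invOn_invFunOn.symm
  have hf' := hf.symm hf.invOn_invFunOn.symm
  set e' := Function.invFunOn e N₀
  set f' := Function.invFunOn f M₀
  refine ⟨fun k => M.filter fun t => f' t ∈ A (e' k), (hA.comp_bijOn he').filter_bijOn hf',
    fun k hk => ?_⟩
  have hek : e (e' k) = k := he.invOn_invFunOn.2 hk
  calc mms N M (v k) ≤ mms N₀ M₀ (v k ∘ f) :=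
        mms_le_mms_of_bijOn (hv k hk) ⟨k, hk⟩ he hf
    _ ≤ bval (v k ∘ f) (A (e' k)) := by
        have := hAv (e' k) (he'.mapsTo hk)
        beta_reduce at this
        rwa [hek] at this
    _ = bval (v k ∘ f ∘ f') (M.filter fun t => f' t ∈ A (e' k)) :=
        (bval_filter_bijOn hf' (hA.1 _ (he'.mapsTo hk))).symm
    _ = bval (v k) (M.filter fun t => f' t ∈ A (e' k)) :=
        sum_congr rfl fun t ht => congrArg (v k) (hf.invOn_invFunOn.2 (mem_filter.1 ht).1)

lemma of_forall_Icc (hv : ChoresInstance N M v) {p q : ℕ}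
    (h : ∀ v' : ℕ → ℕ → ℝ, ChoresInstance (Icc 1 p) (Icc 1 q) v' →
      ExistsMMSAllocation (Icc 1 p) (Icc 1 q) v')
    (hN : N.card = p) (hM : M.card = q) : ExistsMMSAllocation N M v := by
  obtain ⟨e, he⟩ := exists_bijOn_of_card_eq (s := Icc 1 p) (t := N) (by simp [hN])
  obtain ⟨f, hf⟩ := exists_bijOn_of_card_eq (s := Icc 1 q) (t := M) (by simp [hM])
  exact .of_bijOn hv he hf (h _ fun k hk t ht => hv _ (he.mapsTo hk) _ (hf.mapsTo ht))

lemma of_validReduction {N' M' : Finset ℕ} (hR : ValidReduction N M v N' M')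
    (h : ExistsMMSAllocation (N \ N') (M \ M') v) : ExistsMMSAllocation N M v := by
  obtain ⟨hN, hM, ⟨B, hB, hBv⟩, hmms⟩ := hR
  obtain ⟨A, hA, hAv⟩ := h
  refine ⟨_, hB.piecewise hA hN hM, fun k hk => ?_⟩
  split_ifs with hk'
  · exact hBv k hk'
  · exact (hmms k (mem_sdiff.2 ⟨hk, hk'⟩)).trans (hAv k (mem_sdiff.2 ⟨hk, hk'⟩))

lemma of_erase_pair (hv : ChoresInstance N M v) {i c₁ c₂ : ℕ} (hi : i ∈ N) (hc₁ : c₁ ∈ M)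
    (hc₂ : c₂ ∈ M) (hne : c₁ ≠ c₂) (hvi : mms N M (v i) ≤ v i c₁ + v i c₂)
    (hlt : ∀ j ∈ N, j ≠ i → v j c₁ + v j c₂ < mms N M (v j))
    (h : ExistsMMSAllocation (N.erase i) (M \ {c₁, c₂}) v) : ExistsMMSAllocation N M v := by
  rw [← sdiff_singleton_eq_erase] at h
  refine of_validReduction ⟨singleton_subset_iff.2 hi,
    insert_subset hc₁ (singleton_subset_iff.2 hc₂), ⟨fun _ => {c₁, c₂}, ⟨fun _ _ => subset_rfl, fun k hk l hl hkl => ?_, by simp⟩, ?_⟩, ?_⟩ h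
  · simp_all
  · simpa [bval, sum_pair hne] using hvi
  · intro j hj
    obtain ⟨hjN, hji⟩ := mem_sdiff.1 hj
    rw [sdiff_singleton_eq_erase]
    exact mms_le_mms_erase_sdiff_pair_s19 (hv j hjN) hi hc₁ hc₂ hne (hlt j hjN (by simpa using hji))

lemma of_two_large_bundles (hv : ChoresInstance N M v) {A : ℕ → Finset ℕ} (hA : IsPartition N M A)
    {i j b c : ℕ} (hi : i ∈ N) (hj : j ∈ N) (hij : i ≠ j) (hb : b ∈ N) (hc : c ∈ N) (hbc : b ≠ c)
    (hsmall : ∀ k ∈ N, k ≠ b → k ≠ c → (A k).card ≤ 1)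
    (hvi : mms N M (v i) ≤ bval (v i) (A b)) (hvj : mms N M (v j) ≤ bval (v j) (A c)) :
    ExistsMMSAllocation N M v := by
  obtain ⟨σ, hσ, hσi, hσj⟩ := exists_bijOn_apply_eq_apply_eq hi hj hij hb hc hbc
  refine ⟨A ∘ σ, hA.comp_bijOn hσ, fun k hk => ?_⟩
  rcases eq_or_ne k i with rfl | hki
  · simpa [hσi] using hvi
  rcases eq_or_ne k j with rfl | hkj
  · simpa [hσj] using hvj
  refine mms_le_bval_of_card_le_one (hv k hk) ⟨k, hk⟩ (hA.1 _ (hσ.mapsTo hk))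
    (hsmall _ (hσ.mapsTo hk) ?_ ?_)
  · exact fun h => hki (hσ.injOn hk hi (h.trans hσi.symm))
  · exact fun h => hkj (hσ.injOn hk hj (h.trans hσj.symm))

end ExistsMMSAllocation

theorem mostly_small_bundles_chores_general (n c : ℕ) (hc : 0 < c) (v : ℕ → ℕ → ℝ)
    (hchores : ChoresInstance (Finset.Icc 1 n) (Finset.Icc 1 (n + c)) v)
    (nc1 : ℕ) (hnc1 : 0 < nc1)
    (hex : ∀ n' : ℕ, nc1 ≤ n' → ∀ v' : ℕ → ℕ → ℝ,
      ChoresInstance (Finset.Icc 1 n') (Finset.Icc 1 (n' + (c - 1))) v' →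
      ExistsMMSAllocation (Finset.Icc 1 n') (Finset.Icc 1 (n' + (c - 1))) v')
    (hn : nc1 ≤ n - 1)
    (i : ℕ) (hi : i ∈ Finset.Icc 1 n)
    (A : ℕ → Finset ℕ)
    (hA : IsMMSPartition (Finset.Icc 1 n) (Finset.Icc 1 (n + c)) (v i) A)
    (h2 : ∃ S ⊆ Finset.Icc 1 n, n - 2 ≤ S.card ∧ ∀ j ∈ S, (A j).card < 2)
    (h3 : ∃ S ⊆ Finset.Icc 1 n, n - 1 ≤ S.card ∧ ∀ j ∈ S, (A j).card < 3) :
    ExistsMMSAllocation (Finset.Icc 1 n) (Finset.Icc 1 (n + c)) v := by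
  set N := Icc 1 n
  set M := Icc 1 (n + c)
  have hcard : N.card = n := by simp [N]
  obtain ⟨b, hb, c', hc', hbc, hc'2, hsmall⟩ := exists_pair_cover_of_card_filter_le
    (N := N) (f := fun j => (A j).card) (by omega)
    (card_filter_le_of_exists_subset (by rwa [hcard]))
    (card_filter_le_of_exists_subset (by rwa [hcard]))
  by_cases hdir : ∃ j ∈ N, j ≠ i ∧ mms N M (v j) ≤ bval (v j) (A c')
  · obtain ⟨j, hj, hji, hvj⟩ := hdir
    exact .of_two_large_bundles hchores hA.1 hi hj hji.symm hb hc' hbc hsmall (hA.2 b hb) hvj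
  push Not at hdir
  obtain ⟨j, hj⟩ : (N.erase i).Nonempty := card_pos.1 (by rw [card_erase_of_mem hi]; omega)
  obtain ⟨hji, hjN⟩ := mem_erase.1 hj
  have hc'card : (A c').card = 2 := by
    by_contra h
    exact (hdir j hjN hji).not_ge
      (mms_le_bval_of_card_le_one (hchores j hjN) ⟨i, hi⟩ (hA.1.1 c' hc') (by omega))
  obtain ⟨c₁, c₂, hne, hC⟩ := card_eq_two.1 hc'card
  have hC₁ : c₁ ∈ M := hA.1.1 c' hc' (by simp [hC])
  have hC₂ : c₂ ∈ M := hA.1.1 c' hc' (by simp [hC])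
  have hpair : ∀ k, bval (v k) (A c') = v k c₁ + v k c₂ := fun k => hC ▸ sum_pair hne
  refine .of_erase_pair hchores hi hC₁ hC₂ hne (hpair i ▸ hA.2 c' hc')
    (fun j hj hji => hpair j ▸ hdir j hj hji) ?_
  have hv' : ChoresInstance (N.erase i) (M \ {c₁, c₂}) v :=
    fun k hk g hg => hchores k (mem_of_mem_erase hk) g (mem_sdiff.1 hg).1
  refine .of_forall_Icc hv' (hex _ hn) (by rw [card_erase_of_mem hi, hcard]) ?_
  rw [card_sdiff_of_subset (insert_subset hC₁ (singleton_subset_iff.2 hC₂)), card_pair hne]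
  simp only [M, Nat.card_Icc]
  omega

theorem mostly_small_bundles_chores (n c : ℕ) (hc : 0 < c) (v : ℕ → ℕ → ℝ)
    (hchores : ChoresInstance (Finset.Icc 1 n) (Finset.Icc 1 (n + c)) v)
    (hord : OrderedChores (Finset.Icc 1 n) (Finset.Icc 1 (n + c)) v)
    (nc1 : ℕ) (hnc1 : 0 < nc1)
    (hex : ∀ n' : ℕ, nc1 ≤ n' → ∀ v' : ℕ → ℕ → ℝ,
      ChoresInstance (Finset.Icc 1 n') (Finset.Icc 1 (n' + (c - 1))) v' →
      ExistsMMSAllocation (Finset.Icc 1 n') (Finset.Icc 1 (n' + (c - 1))) v')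
    (hn : nc1 ≤ n - 1)
    (i : ℕ) (hi : i ∈ Finset.Icc 1 n)
    (A : ℕ → Finset ℕ)
    (hA : IsMMSPartition (Finset.Icc 1 n) (Finset.Icc 1 (n + c)) (v i) A)
    (h2 : ∃ S ⊆ Finset.Icc 1 n, n - 2 ≤ S.card ∧ ∀ j ∈ S, (A j).card < 2)
    (h3 : ∃ S ⊆ Finset.Icc 1 n, n - 1 ≤ S.card ∧ ∀ j ∈ S, (A j).card < 3) :
    ExistsMMSAllocation (Finset.Icc 1 n) (Finset.Icc 1 (n + c)) v :=
  mostly_small_bundles_chores_general n c hc v hchores nc1 hnc1 hex hn i hi A hA h2 h3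
end
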